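/- Not every binary string is a Papadakis–Webster binary string. Specifically, if B = B_{n−1} B_{n−2} … B_1 B_0 is a Papadakis–Webster binary string of even length n (B_{n−1} being the leading digit), then it cannot happen that B_{n/2} = 1 and B_{n/2−1} = 0; i.e., no even-length PWBS has '1' immediately followed by '0' as its two central digits read from left to right. -/

import Mathlib

/-- Digital reversal of a natural number (in base 10). -/
def rev (D : ℕ) : ℕ := Nat.ofDigits 10 ((Nat.digits 10 D).reverse)

/-- `F` is a Papadakis–Webster integer: `F = E + rev E` where `E = D - rev D`,
for some positive `D` with `D > rev D` such that `E` has the same number of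
decimal digits as `D`. -/
def IsPWI (F : ℕ) : Prop :=
  ∃ D : ℕ, 0 < D ∧ rev D < D ∧
    (Nat.digits 10 (D - rev D)).length = (Nat.digits 10 D).length ∧
    F = (D - rev D) + rev (D - rev D)

/-- `Q` is a Papadakis–Webster binary string: the quotient `F / 99` of a
Papadakis–Webster integer `F`.  Its decimal digit string `B_{n-1} … B_1 B_0`
(with `B_{n-1}` the leading digit) corresponds to the little-endian digit list
`Nat.digits 10 Q`, whose entry at index `i` is `B_i`. -/
def IsPWBS (Q : ℕ) : Prop := ∃ F : ℕ, IsPWI F ∧ Q = F / 99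

/-!
Write `D = ∑ aᵢ 10ⁱ` with `j + 1` digits and compute `E = D - rev D` by schoolbook subtraction
with borrows `βᵢ ∈ {0, 1}`, so that digit `i` of `E` is `aᵢ - a_{j-i} - βᵢ + 10 β_{i+1}`. In
`E + rev E` the digits of `D` cancel and only the borrows survive:
`E + rev E = 99 · ∑_{i<j} β_{j-i} 10ⁱ`, so a PWBS is the borrow string `β_j … β_1`, of length `j`
because `E` keeps the length of `D` only if `β₁ = 1`. For `j = 2m` the central digits are `β_m`
and `β_{m+1}`; at position `m` the digit `a_m` is subtracted from itself, so the borrow passes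
through unchanged and `β_{m+1} = β_m`.
-/

open Finset

theorem List.map_range_getD (l : List ℕ) :
    (List.range l.length).map (fun i => l.getD i 0) = l := by
  refine List.ext_getElem (by simp) fun i _ h₂ => ?_
  simp [List.getElem?_eq_getElem h₂]

theorem List.reverse_map_range (n : ℕ) (f : ℕ → ℕ) :
    ((List.range n).map f).reverse = (List.range n).map (fun i => f (n - 1 - i)) := by
  rw [← List.map_reverse, List.range_eq_range', List.reverse_range', List.map_map,
    ← List.range_eq_range']
  simp [Function.comp_def]

theorem List.getD_map_range (f : ℕ → ℕ) {k i : ℕ} (h : i < k) :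
    ((List.range k).map f).getD i 0 = f i := by
  simp [List.getElem?_range h]

namespace Nat

theorem ofDigits_map_range (b k : ℕ) (f : ℕ → ℕ) :
    ofDigits b ((List.range k).map f) = ∑ i ∈ range k, f i * b ^ i := by
  induction k with
  | zero => simp
  | succ k ih =>
    rw [List.range_succ, List.map_append, ofDigits_append, ih, sum_range_succ]
    simp [mul_comm]

theorem sum_mul_pow_lt {b k : ℕ} {f : ℕ → ℕ} (hb : 1 < b) (hf : ∀ i < k, f i < b) :
    ∑ i ∈ range k, f i * b ^ i < b ^ k := by
  simpa [← ofDigits_map_range] using ofDigits_lt_base_pow_length hb (l := (List.range k).map f)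
    (by simpa using hf)

theorem digits_sum_mul_pow {b k : ℕ} {f : ℕ → ℕ} (hb : 1 < b) (hf : ∀ i < k, f i < b)
    (hlast : f (k - 1) ≠ 0) :
    digits b (∑ i ∈ range k, f i * b ^ i) = (List.range k).map f := by
  rw [← ofDigits_map_range]
  refine digits_ofDigits b hb _ (by simpa using hf) fun h => ?_
  simpa using hlast

theorem digits_sum_mul_pow_of_length {b k : ℕ} {f : ℕ → ℕ} (hb : 1 < b)
    (hf : ∀ i < k, f i < b) (hlen : (digits b (∑ i ∈ range k, f i * b ^ i)).length = k) :
    digits b (∑ i ∈ range k, f i * b ^ i) = (List.range k).map f := by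
  obtain _ | k := k
  · simp
  refine digits_sum_mul_pow hb hf fun hlast => ?_
  have hlt : ∑ i ∈ range (k + 1), f i * b ^ i < b ^ k := by
    rw [sum_range_succ, show f k = 0 by simpa using hlast, zero_mul, add_zero]
    exact sum_mul_pow_lt hb fun i hi => hf i (by omega)
  have := (digits_length_le_iff hb _).2 hlt
  omega

theorem eq_sum_of_digits_eq {b n k : ℕ} {f : ℕ → ℕ} (h : digits b n = (List.range k).map f) :
    n = ∑ i ∈ range k, f i * b ^ i := by
  rw [← ofDigits_digits b n, h, ofDigits_map_range]

theorem lt_base_of_digits_eq {b n k : ℕ} {f : ℕ → ℕ} (hb : 1 < b)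
    (h : digits b n = (List.range k).map f) {i : ℕ} (hi : i < k) : f i < b :=
  digits_lt_base hb (h ▸ List.mem_map_of_mem (List.mem_range.2 hi))

end Nat

theorem rev_eq_sum_of_digits_eq {n k : ℕ} {f : ℕ → ℕ}
    (h : Nat.digits 10 n = (List.range (k + 1)).map f) :
    rev n = ∑ i ∈ range (k + 1), f (k - i) * 10 ^ i := by
  simp [rev, h, List.reverse_map_range, Nat.ofDigits_map_range]

namespace DigitSubtraction

variable (x y : ℕ → ℕ)

/-- Borrow into position `i` when the digit sequence `y` is subtracted from `x`. -/
def borrow : ℕ → ℕ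
  | 0 => 0
  | i + 1 => if x i < y i + borrow i then 1 else 0

/-- The truncated subtraction is exact whenever `y i < b`, see `digit_add`. -/
def digit (b i : ℕ) : ℕ := x i + b * borrow x y (i + 1) - (y i + borrow x y i)

theorem borrow_le_one (i : ℕ) : borrow x y i ≤ 1 := by
  cases i with
  | zero => simp [borrow]
  | succ i => rw [borrow]; split <;> omega

variable {x y}

theorem borrow_succ_of_eq {i : ℕ} (h : x i = y i) : borrow x y (i + 1) = borrow x y i := by
  have := borrow_le_one x y i
  rw [borrow, h]
  split <;> omega

theorem digit_add {b i : ℕ} (hy : y i < b) :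
    digit x y b i + y i + borrow x y i = x i + b * borrow x y (i + 1) := by
  have := borrow_le_one x y i
  rw [digit, borrow]
  split <;> omega

theorem digit_lt {b i : ℕ} (hx : x i < b) : digit x y b i < b := by
  rw [digit, borrow]
  split <;> omega

theorem sum_digit_add {b k : ℕ} (hy : ∀ i < k, y i < b) :
    ∑ i ∈ range k, digit x y b i * b ^ i + ∑ i ∈ range k, y i * b ^ i
      = ∑ i ∈ range k, x i * b ^ i + borrow x y k * b ^ k := by
  induction k with
  | zero => simp [borrow]
  | succ k ih =>
    simp only [sum_range_succ]
    linear_combination (ih fun i hi => hy i (by omega)) +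
      b ^ k * digit_add (x := x) (hy k (by omega))

theorem borrow_eq_zero_of_le {b k : ℕ} (hb : 1 < b) (hx : ∀ i < k, x i < b)
    (hy : ∀ i < k, y i < b) (h : ∑ i ∈ range k, y i * b ^ i ≤ ∑ i ∈ range k, x i * b ^ i) :
    borrow x y k = 0 := by
  have hsum := sum_digit_add (x := x) hy
  have hlt := Nat.sum_mul_pow_lt hb fun i hi => digit_lt (y := y) (hx i hi)
  obtain h0 | h1 : borrow x y k = 0 ∨ borrow x y k = 1 := by have := borrow_le_one x y k; omega
  · exact h0
  · rw [h1, one_mul] at hsum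
    omega

/-- For `E = ∑ digit a (a (j - ·)) b i * bⁱ` and `C` the borrow sum, this reads
`rev E + D + C = rev D + b² C`. -/
theorem sum_digit_reflect_add {a : ℕ → ℕ} {b j : ℕ} (ha : ∀ i < j + 1, a i < b)
    (hβ : borrow a (fun i => a (j - i)) (j + 1) = 0) :
    ∑ i ∈ range (j + 1), digit a (fun i => a (j - i)) b (j - i) * b ^ i
        + ∑ i ∈ range (j + 1), a i * b ^ i
        + ∑ i ∈ range j, borrow a (fun i => a (j - i)) (j - i) * b ^ i
      = ∑ i ∈ range (j + 1), a (j - i) * b ^ i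
        + b * b * ∑ i ∈ range j, borrow a (fun i => a (j - i)) (j - i) * b ^ i := by
  set β := borrow a (fun i => a (j - i))
  have hterm : ∀ i ∈ range (j + 1),
      digit a (fun i => a (j - i)) b (j - i) * b ^ i + a i * b ^ i + β (j - i) * b ^ i
        = a (j - i) * b ^ i + b * (β (j + 1 - i) * b ^ i) := by
    intro i hi
    have hi : i < j + 1 := mem_range.1 hi
    have := digit_add (x := a) (y := fun i => a (j - i)) (i := j - i) (b := b)
      (by simpa [show j - (j - i) = i by omega] using ha i hi)
    rw [show j - (j - i) = i by omega, show j - i + 1 = j + 1 - i by omega] at this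
    linear_combination b ^ i * this
  have hlow : ∑ i ∈ range (j + 1), β (j - i) * b ^ i = ∑ i ∈ range j, β (j - i) * b ^ i := by
    simp [sum_range_succ, β, borrow]
  have hhigh : ∑ i ∈ range (j + 1), β (j + 1 - i) * b ^ i
      = b * ∑ i ∈ range j, β (j - i) * b ^ i := by
    rw [sum_range_succ', mul_sum]
    simp only [hβ, Nat.sub_zero, pow_zero, mul_one, add_zero, Nat.add_sub_add_right, pow_succ]
    exact sum_congr rfl fun i _ => by ring
  have := sum_congr rfl hterm
  simp only [sum_add_distrib, ← mul_sum] at this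
  rw [hlow, hhigh] at this
  linear_combination this

end DigitSubtraction

open DigitSubtraction

section Reversal

variable {D j : ℕ} {a : ℕ → ℕ}

theorem borrow_rev_eq_zero (hdig : Nat.digits 10 D = (List.range (j + 1)).map a)
    (hrev : rev D ≤ D) : borrow a (fun i => a (j - i)) (j + 1) = 0 := by
  have ha := fun i => Nat.lt_base_of_digits_eq (by norm_num) hdig (i := i)
  refine borrow_eq_zero_of_le (b := 10) (by norm_num) ha (fun i hi => ha _ (by omega)) ?_
  rwa [← rev_eq_sum_of_digits_eq hdig, ← Nat.eq_sum_of_digits_eq hdig]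

theorem sub_rev_eq_sum (hdig : Nat.digits 10 D = (List.range (j + 1)).map a)
    (hrev : rev D ≤ D) :
    D - rev D = ∑ i ∈ range (j + 1), digit a (fun i => a (j - i)) 10 i * 10 ^ i := by
  have ha := fun i => Nat.lt_base_of_digits_eq (by norm_num) hdig (i := i)
  have := sum_digit_add (x := a) (b := 10) (k := j + 1) (fun i hi => ha (j - i) (by omega))
  rw [borrow_rev_eq_zero hdig hrev, zero_mul, add_zero, ← rev_eq_sum_of_digits_eq hdig,
    ← Nat.eq_sum_of_digits_eq hdig] at this
  omega

theorem digits_sub_rev (hdig : Nat.digits 10 D = (List.range (j + 1)).map a)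
    (hrev : rev D ≤ D)
    (hlen : (Nat.digits 10 (D - rev D)).length = (Nat.digits 10 D).length) :
    Nat.digits 10 (D - rev D) = (List.range (j + 1)).map (digit a (fun i => a (j - i)) 10) := by
  rw [sub_rev_eq_sum hdig hrev] at hlen ⊢
  refine Nat.digits_sum_mul_pow_of_length (by norm_num) (fun i hi => digit_lt ?_) ?_
  · exact Nat.lt_base_of_digits_eq (by norm_num) hdig hi
  · simpa [hdig] using hlen

theorem sub_rev_add_rev (hdig : Nat.digits 10 D = (List.range (j + 1)).map a)
    (hrev : rev D ≤ D)
    (hlen : (Nat.digits 10 (D - rev D)).length = (Nat.digits 10 D).length) :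
    D - rev D + rev (D - rev D)
      = 99 * ∑ i ∈ range j, borrow a (fun i => a (j - i)) (j - i) * 10 ^ i := by
  have key := sum_digit_reflect_add (a := a) (b := 10)
    (fun i hi => Nat.lt_base_of_digits_eq (by norm_num) hdig hi) (borrow_rev_eq_zero hdig hrev)
  rw [← rev_eq_sum_of_digits_eq (digits_sub_rev hdig hrev hlen), ← Nat.eq_sum_of_digits_eq hdig,
    ← rev_eq_sum_of_digits_eq hdig] at key
  omega

theorem units_lt_leading_of_rev_lt (hdig : Nat.digits 10 D = (List.range (j + 1)).map a)
    (hrev : rev D < D)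
    (hlen : (Nat.digits 10 (D - rev D)).length = (Nat.digits 10 D).length) : a 0 < a j := by
  have hlast := Nat.getLast_digit_ne_zero 10 (Nat.sub_ne_zero_of_lt hrev)
  simp only [digits_sub_rev hdig hrev.le hlen, List.getLast_map, List.getLast_range,
    Nat.add_sub_cancel] at hlast
  have := digit_add (x := a) (y := fun i => a (j - i)) (i := j) (b := 10)
    (by simpa using Nat.lt_base_of_digits_eq (by norm_num) hdig (i := 0) (by omega))
  rw [borrow_rev_eq_zero hdig hrev.le, Nat.sub_self] at this
  omega

end Reversal

theorem IsPWBS.exists_digits_eq_borrow {Q : ℕ} (hQ : IsPWBS Q) :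
    ∃ (a : ℕ → ℕ) (j : ℕ),
      Nat.digits 10 Q = (List.range j).map fun i => borrow a (fun i => a (j - i)) (j - i) := by
  obtain ⟨_, ⟨D, hD0, hrev, hlen, rfl⟩, rfl⟩ := hQ
  obtain ⟨j, hj⟩ : ∃ j, (Nat.digits 10 D).length = j + 1 :=
    Nat.exists_eq_succ_of_ne_zero
      (List.length_pos_iff.2 (Nat.digits_ne_nil_iff_ne_zero.2 hD0.ne')).ne'
  have hdig : Nat.digits 10 D = (List.range (j + 1)).map fun i => (Nat.digits 10 D).getD i 0 := by
    rw [← hj, List.map_range_getD]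
  have hlead := units_lt_leading_of_rev_lt hdig hrev hlen
  obtain _ | j := j
  · exact absurd hlead (lt_irrefl _)
  refine ⟨fun i => (Nat.digits 10 D).getD i 0, j + 1, ?_⟩
  rw [sub_rev_add_rev hdig hrev.le hlen, Nat.mul_div_cancel_left _ (by norm_num)]
  refine Nat.digits_sum_mul_pow (by norm_num)
    (fun i _ => (borrow_le_one _ _ _).trans_lt (by norm_num)) ?_
  rw [show j + 1 - (j + 1 - 1) = 0 + 1 by omega, borrow, if_pos (by simpa [borrow] using hlead)]
  exact one_ne_zero

/-- no Papadakis–Webster binary string of even length `n` has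
`B_{n/2} = 1` and `B_{n/2 - 1} = 0`, i.e. the digit pair `1 0` can never occur
at the two central positions (read from left to right) of an even-length PWBS. -/
theorem stmt5 (Q n : ℕ) (hQ : IsPWBS Q)
    (hn : (Nat.digits 10 Q).length = n) (heven : Even n) :
    ¬ ((Nat.digits 10 Q).getD (n / 2) 0 = 1 ∧ (Nat.digits 10 Q).getD (n / 2 - 1) 0 = 0) := by
  obtain ⟨a, j, hdig⟩ := hQ.exists_digits_eq_borrow
  obtain ⟨m, rfl⟩ := heven
  rw [hdig] at hn ⊢
  simp only [List.length_map, List.length_range] at hn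
  subst hn
  rintro ⟨h1, h0⟩
  obtain rfl | hm := Nat.eq_zero_or_pos m
  · simp at h1
  rw [show (m + m) / 2 = m by omega, List.getD_map_range _ (by omega),
    show m + m - m = m by omega] at h1
  rw [show (m + m) / 2 - 1 = m - 1 by omega, List.getD_map_range _ (by omega),
    show m + m - (m - 1) = m + 1 by omega] at h0
  -- position `m` subtracts `a m` from itself
  have := borrow_succ_of_eq (x := a) (y := fun i => a (m + m - i)) (i := m) (by simp)
  omega
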